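/- arXiv:2105.03956 — 4 statements merged into one kernel-verified Lean document; each statement's English description precedes it below -/
import Mathlib

section
/- Let ρ ≥ 1 be a real number, let K, k > 0 be integers with K > k, and let n_1, …, n_K be non-negative integers, all less than ρ^{K/k - 2 - 1/k}. Then there exists i ∈ {1, …, K−k} such that ρ·n_i ≥ n_j for all j with i+1 ≤ j ≤ i+k. -/
/-- pigeonhole-style lemma on integer sequences. -/
theorem stmt_0 (ρ : ℝ) (hρ : 1 ≤ ρ) (K k : ℕ) (hk : 0 < k) (hK : k < K)
    (n : ℕ → ℕ)
    (hn : ∀ j, 1 ≤ j → j ≤ K → (n j : ℝ) < ρ ^ ((K : ℝ) / (k : ℝ) - 2 - 1 / (k : ℝ))) :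
    ∃ i, 1 ≤ i ∧ i ≤ K - k ∧ ∀ j, i + 1 ≤ j → j ≤ i + k → (n j : ℝ) ≤ ρ * (n i : ℝ) := by
  by_contra hcon
  push_neg at hcon
  have hρ0 : (0:ℝ) < ρ := lt_of_lt_of_le one_pos hρ
  have key : ∀ t, 1 + (t+1)*k ≤ K → ∃ i, 1 ≤ i ∧ i ≤ 1 + (t+1)*k ∧ ρ ^ t ≤ (n i : ℝ) := by
    intro t
    induction t with
    | zero =>
      intro h
      obtain ⟨j, hj1, hj2, hj3⟩ := hcon 1 le_rfl (by omega)
      refine ⟨j, by omega, by omega, ?_⟩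
      have h0 : (0:ℝ) ≤ ρ * (n 1 : ℝ) := by positivity
      have h1 : (0:ℝ) < (n j : ℝ) := lt_of_le_of_lt h0 hj3
      have h2 : 0 < n j := by exact_mod_cast h1
      simpa using (by exact_mod_cast h2 : (1:ℝ) ≤ (n j : ℝ))
    | succ t ih =>
      intro h
      have e1 : (t+1+1)*k = (t+1)*k + k := by ring
      obtain ⟨i, hi1, hi2, hi3⟩ := ih (by omega)
      obtain ⟨j, hj1, hj2, hj3⟩ := hcon i hi1 (by omega)
      refine ⟨j, by omega, by omega, ?_⟩
      calc ρ ^ (t+1) = ρ * ρ ^ t := by ring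
        _ ≤ ρ * (n i : ℝ) := mul_le_mul_of_nonneg_left hi3 hρ0.le
        _ ≤ (n j : ℝ) := hj3.le
  set m := (K-1)/k with hm
  have hdiv := Nat.div_add_mod (K-1) k
  have hmod := Nat.mod_lt (K-1) hk
  rw [← hm] at hdiv
  have hmk : k * m ≤ K - 1 := by omega
  have hKm : K ≤ k * m + k := by omega
  have hm1 : 1 ≤ m := by
    by_contra h
    have hm0 : m = 0 := Nat.eq_zero_of_not_pos h
    rw [hm0, Nat.mul_zero] at hKm
    omega
  have hcond : 1 + ((m-1)+1)*k ≤ K := by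
    have e2 : ((m-1)+1)*k = k * m := by
      have : (m-1)+1 = m := by omega
      rw [this]; ring
    omega
  obtain ⟨i, hi1, hi2, hi3⟩ := key (m-1) hcond
  have hiK : i ≤ K := by omega
  have hni := hn i hi1 hiK
  have hk0 : (0:ℝ) < (k:ℝ) := by exact_mod_cast hk
  have hKr : (K:ℝ) ≤ (k:ℝ) * m + k := by exact_mod_cast hKm
  have h1 : (K:ℝ)/k ≤ (m:ℝ) + 1 := by
    rw [div_le_iff₀ hk0]; nlinarith
  have h2 : (0:ℝ) < 1/(k:ℝ) := by positivity
  have hexp : (K : ℝ) / (k : ℝ) - 2 - 1 / (k : ℝ) ≤ ((m-1 : ℕ) : ℝ) := by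
    have hc : ((m-1:ℕ):ℝ) = (m:ℝ) - 1 := by
      push_cast [hm1]; ring
    rw [hc]; linarith
  have hle : ρ ^ ((K : ℝ) / (k : ℝ) - 2 - 1 / (k : ℝ)) ≤ ρ ^ (m-1 : ℕ) := by
    calc ρ ^ ((K : ℝ) / (k : ℝ) - 2 - 1 / (k : ℝ)) ≤ ρ ^ (((m-1:ℕ)):ℝ) :=
          Real.rpow_le_rpow_of_exponent_le hρ hexp
      _ = ρ ^ (m-1 : ℕ) := Real.rpow_natCast ρ (m-1)
  linarith
end

section
/- Let c > 0 and let G be a finite simple graph such that there are no disjoint subsets A, B of V(G), anticomplete to each other, with |A| ≥ |G|^{1−c}/4 and |B| ≥ |G|/4. Then there exists Y ⊆ V(G) with |Y| ≤ |G|^{1−c}/4 such that the induced subgraph G∖Y is |G|^c-expanding, i.e., for every X ⊆ V(G)∖Y, the closed neighbourhood of X in G∖Y has size at least min(|G|^c·|X|, |G∖Y|/2). -/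
open Finset

/-- Closed neighbourhood of a finite vertex set. -/
def stmtNc {V : Type} [Fintype V] [DecidableEq V] (G : SimpleGraph V) [DecidableRel G.Adj]
    (S : Finset V) : Finset V :=
  S ∪ Finset.univ.filter (fun v => ∃ x ∈ S, G.Adj x v)

/-- a (|G|^{1-c}/4, |G|/4)-coherent graph has a small set Y whose removal
leaves a |G|^c-expanding graph. -/
theorem stmt_2 {V : Type} [Fintype V] [DecidableEq V] (G : SimpleGraph V) [DecidableRel G.Adj]
    (c : ℝ) (hc : 0 < c)
    (hcoherent : ¬ ∃ A B : Finset V, Disjoint A B ∧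
      (∀ a ∈ A, ∀ b ∈ B, ¬ G.Adj a b) ∧
      ((Fintype.card V : ℝ) ^ (1 - c)) / 4 ≤ (A.card : ℝ) ∧
      (Fintype.card V : ℝ) / 4 ≤ (B.card : ℝ)) :
    ∃ Y : Finset V, (Y.card : ℝ) ≤ ((Fintype.card V : ℝ) ^ (1 - c)) / 4 ∧
      ∀ X : Finset V, X ⊆ Yᶜ →
        min ((Fintype.card V : ℝ) ^ c * X.card) ((Yᶜ.card : ℝ) / 2) ≤
          (((X ∪ (Yᶜ \ X).filter (fun v => ∃ x ∈ X, G.Adj x v)).card : ℝ)) := by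
  classical
  set n : ℝ := (Fintype.card V : ℝ) with hn
  have hcoh : ∀ A B : Finset V, Disjoint A B → (∀ a ∈ A, ∀ b ∈ B, ¬ G.Adj a b) →
      n ^ (1 - c) / 4 ≤ (A.card : ℝ) → n / 4 ≤ (B.card : ℝ) → False := by
    intro A B h1 h2 h3 h4
    exact hcoherent ⟨A, B, h1, h2, h3, h4⟩
  by_cases hV : Fintype.card V = 0
  · -- trivial empty case
    haveI : IsEmpty V := Fintype.card_eq_zero_iff.mp hV
    refine ⟨∅, by simp only [Finset.card_empty, Nat.cast_zero]; positivity, ?_⟩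
    intro X hX
    have hXe : X = ∅ := Finset.eq_empty_of_isEmpty X
    have hYe : (∅ : Finset V)ᶜ = ∅ := Finset.eq_empty_of_isEmpty _
    subst hXe
    simp [hYe]
  · -- main case : card V ≥ 1
    have hn1 : (1 : ℝ) ≤ n := by
      have h : 1 ≤ Fintype.card V := Nat.one_le_iff_ne_zero.mpr hV
      rw [hn]
      exact_mod_cast h
    have hn0 : (0 : ℝ) < n := lt_of_lt_of_le one_pos hn1
    set α : ℝ := n ^ (1 - c) / 4 with hα
    have hτpos : (0 : ℝ) < n ^ c := Real.rpow_pos_of_pos hn0 c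
    have hrn : n ^ c * n ^ (1 - c) = n := by
      rw [← Real.rpow_add hn0]
      have : c + (1 - c) = 1 := by ring
      rw [this, Real.rpow_one]
    have hαn : α ≤ n / 4 := by
      have h1 : n ^ (1 - c) ≤ n ^ (1 : ℝ) :=
        Real.rpow_le_rpow_of_exponent_le hn1 (by linarith)
      rw [Real.rpow_one] at h1
      rw [hα]; linarith
    have hαpos : (0 : ℝ) ≤ α := by positivity
    -- choose a maximum-cardinality Y with the invariant
    set Q : Finset V → Prop :=
      fun Y => ((stmtNc G Y).card : ℝ) ≤ n ^ c * Y.card ∧ (Y.card : ℝ) ≤ α with hQdef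
    have hQempty : Q ∅ := by
      refine ⟨?_, ?_⟩
      · simp [stmtNc]
      · simpa using hαpos
    set s : Finset (Finset V) := Finset.univ.filter Q with hs
    have hsne : s.Nonempty := ⟨∅, Finset.mem_filter.mpr ⟨Finset.mem_univ _, hQempty⟩⟩
    obtain ⟨Y, hYs, hmax⟩ := Finset.exists_max_image s Finset.card hsne
    have hQY : Q Y := (Finset.mem_filter.mp hYs).2
    have hYcard : (Y.card : ℝ) ≤ α := hQY.2
    have hYc : ((Yᶜ : Finset V).card : ℝ) = n - Y.card := by
      rw [Finset.card_compl, Nat.cast_sub (Finset.card_le_univ Y)]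
    refine ⟨Y, hYcard, ?_⟩
    intro X hX
    by_contra hlt
    push_neg at hlt
    obtain ⟨hbadτ, hbad2⟩ := lt_min_iff.mp hlt
    set NX : Finset V := X ∪ (Yᶜ \ X).filter (fun v => ∃ x ∈ X, G.Adj x v) with hNX
    have hXsubNX : X ⊆ NX := Finset.subset_union_left
    have hNXnn : (0 : ℝ) ≤ (NX.card : ℝ) := Nat.cast_nonneg _
    -- X is nonempty
    have hXne : X.Nonempty := by
      rcases Finset.eq_empty_or_nonempty X with h | h
      · subst h
        simp only [Finset.card_empty, Nat.cast_zero, mul_zero] at hbadτ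
        exact absurd hbadτ (not_lt.mpr hNXnn)
      · exact h
    -- Step A: |X| < α, by coherence applied to (X, Yᶜ \ NX)
    set B : Finset V := Yᶜ \ NX with hB
    have hsplit : ((Yᶜ : Finset V).card : ℝ) ≤ (B.card : ℝ) + (NX.card : ℝ) := by
      have h1 : (Yᶜ : Finset V) ⊆ B ∪ NX := by
        intro v hv
        by_cases hvN : v ∈ NX
        · exact Finset.mem_union_right _ hvN
        · exact Finset.mem_union_left _ (Finset.mem_sdiff.mpr ⟨hv, hvN⟩)
      have h2 := Finset.card_le_card h1
      have h3 := Finset.card_union_le B NX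
      have : (Yᶜ : Finset V).card ≤ B.card + NX.card := le_trans h2 h3
      exact_mod_cast this
    have hBanti : ∀ a ∈ X, ∀ b ∈ B, ¬ G.Adj a b := by
      intro a ha b hb hadj
      obtain ⟨hbY, hbN⟩ := Finset.mem_sdiff.mp hb
      apply hbN
      have hbX : b ∉ X := fun h => hbN (hXsubNX h)
      exact Finset.mem_union_right _
        (Finset.mem_filter.mpr ⟨Finset.mem_sdiff.mpr ⟨hbY, hbX⟩, ⟨a, ha, hadj⟩⟩)
    have hBdisj : Disjoint X B := by
      rw [Finset.disjoint_left]
      intro a haX haB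
      exact (Finset.mem_sdiff.mp haB).2 (hXsubNX haX)
    have hBbig : n / 4 ≤ (B.card : ℝ) := by
      -- |B| ≥ |Yᶜ| - |NX| > |Yᶜ|/2 = (n - |Y|)/2 ≥ 3n/8 ≥ n/4
      have h1 : (Y.card : ℝ) ≤ n / 4 := le_trans hYcard hαn
      linarith [hbad2, hYc]
    have hXsmall : (X.card : ℝ) < α := by
      by_contra h
      push_neg at h
      exact hcoh X B hBdisj hBanti h hBbig
    -- Step B : Y ∪ X satisfies the neighbourhood part of the invariant
    set Y' : Finset V := Y ∪ X with hY'
    have hdisjYX : Disjoint Y X := by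
      rw [Finset.disjoint_left]
      intro a haY haX
      exact (Finset.mem_compl.mp (hX haX)) haY
    have hY'card : (Y'.card : ℝ) = (Y.card : ℝ) + (X.card : ℝ) := by
      rw [hY', Finset.card_union_of_disjoint hdisjYX]
      push_cast; ring
    have hsubN : stmtNc G Y' ⊆ stmtNc G Y ∪ NX := by
      intro v hv
      simp only [stmtNc, hY', hNX, Finset.mem_union, Finset.mem_filter, Finset.mem_univ,
        true_and, Finset.mem_sdiff, Finset.mem_compl] at hv ⊢
      rcases hv with (hvY | hvX) | ⟨x, hx, hadj⟩
      · exact Or.inl (Or.inl hvY)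
      · exact Or.inr (Or.inl hvX)
      · rcases hx with hxY | hxX
        · exact Or.inl (Or.inr ⟨x, hxY, hadj⟩)
        · by_cases hvY : v ∈ Y
          · exact Or.inl (Or.inl hvY)
          · by_cases hvX : v ∈ X
            · exact Or.inr (Or.inl hvX)
            · exact Or.inr (Or.inr ⟨⟨hvY, hvX⟩, x, hxX, hadj⟩)
    have hNcY' : ((stmtNc G Y').card : ℝ) < n ^ c * Y'.card := by
      have h1 : ((stmtNc G Y').card : ℝ) ≤ ((stmtNc G Y).card : ℝ) + (NX.card : ℝ) := by
        have := le_trans (Finset.card_le_card hsubN) (Finset.card_union_le _ _)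
        exact_mod_cast this
      have h2 := hQY.1
      rw [hY'card, mul_add]
      linarith
    by_cases hY'small : (Y'.card : ℝ) ≤ α
    · -- contradicts maximality of Y
      have hQY' : Q Y' := ⟨le_of_lt hNcY', hY'small⟩
      have hY's : Y' ∈ s := Finset.mem_filter.mpr ⟨Finset.mem_univ _, hQY'⟩
      have h1 := hmax Y' hY's
      have h2 : Y.card < Y'.card := by
        rw [hY', Finset.card_union_of_disjoint hdisjYX]
        have : 0 < X.card := Finset.card_pos.mpr hXne
        omega
      exact absurd h1 (not_le.mpr h2)
    · -- Y' is big: coherence applied to (Y', (N[Y'])ᶜ)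
      push_neg at hY'small
      set B2 : Finset V := (stmtNc G Y')ᶜ with hB2
      have hanti2 : ∀ a ∈ Y', ∀ b ∈ B2, ¬ G.Adj a b := by
        intro a ha b hb hadj
        apply Finset.mem_compl.mp hb
        exact Finset.mem_union_right _
          (Finset.mem_filter.mpr ⟨Finset.mem_univ _, ⟨a, ha, hadj⟩⟩)
      have hdisj2 : Disjoint Y' B2 := by
        rw [Finset.disjoint_left]
        intro a ha haB
        exact Finset.mem_compl.mp haB (Finset.mem_union_left _ ha)
      have hB2card : (B2.card : ℝ) = n - ((stmtNc G Y').card : ℝ) := by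
        rw [hB2, Finset.card_compl, Nat.cast_sub (Finset.card_le_univ _)]
      have hNchalf : ((stmtNc G Y').card : ℝ) < n / 2 := by
        have h1 : (Y'.card : ℝ) < 2 * α := by rw [hY'card]; linarith
        have h2 : n ^ c * (Y'.card : ℝ) < n ^ c * (2 * α) :=
          (mul_lt_mul_iff_right₀ hτpos).mpr h1
        have h3 : n ^ c * (2 * α) = n / 2 := by
          rw [hα]
          calc n ^ c * (2 * (n ^ (1 - c) / 4)) = (n ^ c * n ^ (1 - c)) / 2 := by ring
          _ = n / 2 := by rw [hrn]
        linarith [hNcY']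
      have hB2big : n / 4 ≤ (B2.card : ℝ) := by
        rw [hB2card]; linarith
      exact hcoh Y' B2 hdisj2 hanti2 (le_of_lt hY'small) hB2big
end

section
/- Let c > 0 with 1/c an integer, let ℓ ≥ 1 be an integer, define r = 2 + 1/c, K = r^ℓ − 1, k = r^{ℓ−1} − 1. Let ε > 0 and let G be an ε-sparse (ε|G|^{1−c}, ε|G|)-coherent graph. Let B_0, B_1, …, B_K be pairwise disjoint subsets of V(G), with B_0 nonempty and |B_i| ≥ r^{2ℓ}·ε|G| for 1 ≤ i ≤ K. Then either (a) there is an induced path of G with vertices p_0, p_1, …, p_ℓ in order and indices 1 ≤ t_1 < t_2 < ⋯ < t_ℓ ≤ K such that p_0 ∈ B_0 and p_i ∈ B_{t_i} for 1 ≤ i ≤ ℓ; or (b) |B_0| ≤ K·ε|G|^{1−c}, and there exist sets C_1, …, C_{K−k} with union B_0 such that for each i ∈ {1, …, K−k} and each j with i ≤ j ≤ i+k, at least r^{2ℓ−2}·ε|G| vertices of B_j have no neighbour in C_i. -/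
/-!
Induction on `ℓ`, proving that without a path `B₀` has at least `r^(2ℓ-2) ε|G|` non-neighbours
in each of `B₁, …, B_{k+1}`. For the step, let `S ⊆ B₀` have at most `2ε|G|` neighbours in each of
`B_{j+1}, …, B_{j+k}`. The neighbours of `S` in `B_j`, followed by the non-neighbours of `S` in
`B_{j+1}, …, B_{j+k}`, form a family for `ℓ - 1`; a path there extends backwards through a vertex
of `S`, so by induction and coherence `S` has fewer than `ε|G|^(1-c)` neighbours in `B_j`.
Singletons satisfy the hypothesis by sparsity. Merging `q = ⌈|G|^c⌉` such sets preserves it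
(the union has at most `q ε|G|^(1-c) ≤ 2ε|G|` neighbours in a block) at the cost of `k` blocks, and
after `1/c = r - 2` rounds `q^(r-2) ≥ |G|` reaches all of `B₀` while `B₁, …, B_{k+1}` remain.
Then `C₁ = B₀` (all other `Cᵢ` empty) is the required cover, and coherence against the
non-neighbours of `B₀` in `B₁` bounds `|B₀|` by `ε|G|^(1-c)`.
-/

open Finset

lemma two_lt_of_eq_two_add_one_div {c : ℝ} {r : ℕ} (hc : 0 < c) (hr : (r : ℝ) = 2 + 1 / c) :
    2 < r := by
  have : (2 : ℝ) < r := by rw [hr]; linarith [one_div_pos.2 hc]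
  exact_mod_cast this

lemma mul_cast_sub_two_eq_one {c : ℝ} {r : ℕ} (hc : 0 < c) (hr : (r : ℝ) = 2 + 1 / c) :
    c * ((r - 2 : ℕ) : ℝ) = 1 := by
  rw [Nat.cast_sub (two_lt_of_eq_two_add_one_div hc hr).le, hr]
  field_simp
  ring

lemma exists_nat_le_pow_and_mul_rpow_le {c n : ℝ} {m : ℕ} (hcm : c * m = 1) (hn : 1 ≤ n) :
    ∃ q : ℕ, n ≤ q ^ m ∧ q * n ^ (1 - c) ≤ 2 * n := by
  have hc : 0 ≤ c := by
    by_contra! h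
    nlinarith [(Nat.cast_nonneg m : (0 : ℝ) ≤ m)]
  have hnc : 0 ≤ n ^ c := Real.rpow_nonneg (by linarith) c
  refine ⟨⌈n ^ c⌉₊, ?_, ?_⟩
  · calc n = (n ^ c) ^ m := by
          rw [← Real.rpow_natCast, ← Real.rpow_mul (by linarith), hcm, Real.rpow_one]
      _ ≤ _ := pow_le_pow_left₀ hnc (Nat.le_ceil _) m
  · have hq : (⌈n ^ c⌉₊ : ℝ) ≤ n ^ c + 1 := (Nat.ceil_lt_add_one hnc).le
    have hsplit : n ^ c * n ^ (1 - c) = n := by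
      rw [← Real.rpow_add (by linarith), add_sub_cancel, Real.rpow_one]
    have hle : n ^ (1 - c) ≤ n := Real.rpow_le_self_of_one_le hn (by linarith)
    nlinarith [Real.rpow_nonneg (by linarith : (0 : ℝ) ≤ n) (1 - c)]

lemma add_mul_sub_one_le {r a j : ℕ} (hr : 2 ≤ r) (ha : 1 ≤ a) (hj : j ≤ a) :
    j + (r - 2 + 1) * (a - 1) ≤ r * a - 1 := by
  obtain ⟨s, rfl⟩ := Nat.exists_eq_add_of_le' hr
  obtain ⟨b, rfl⟩ := Nat.exists_eq_add_of_le' ha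
  have : (s + 2) * (b + 1) = (s + 1) * b + b + s + 2 := by ring
  simp only [Nat.add_sub_cancel]
  omega

lemma pow_mul_le_pow_succ_mul_sub {r : ℕ} (hr : 2 ≤ r) {x : ℝ} (hx : 0 ≤ x) (L : ℕ) :
    (r : ℝ) ^ (2 * L) * x ≤ (r : ℝ) ^ (2 * (L + 1)) * x - 2 * x := by
  have hr' : (2 : ℝ) ≤ r := by exact_mod_cast hr
  have h1 : (1 : ℝ) ≤ (r : ℝ) ^ (2 * L) := one_le_pow₀ (by linarith)
  have h4 : (r : ℝ) ^ (2 * L) * 4 ≤ (r : ℝ) ^ (2 * L) * r ^ 2 := by gcongr; nlinarith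
  rw [show (r : ℝ) ^ (2 * (L + 1)) = (r : ℝ) ^ (2 * L) * r ^ 2 by ring]
  nlinarith

namespace SimpleGraph

section Defs

variable {V : Type} (G : SimpleGraph V)

def IsCoherent (α β : ℝ) : Prop :=
  ¬ ∃ A B : Finset V, Disjoint A B ∧ (∀ a ∈ A, ∀ b ∈ B, ¬ G.Adj a b) ∧
    α ≤ (A.card : ℝ) ∧ β ≤ (B.card : ℝ)

def HasOrderedInducedPath (ℓ K : ℕ) (B : ℕ → Finset V) : Prop :=
  ∃ (p : ℕ → V) (t : ℕ → ℕ),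
    (∀ i ≤ ℓ, ∀ j ≤ ℓ, (G.Adj (p i) (p j) ↔ (i = j + 1 ∨ j = i + 1))) ∧
    (∀ i ≤ ℓ, ∀ j ≤ ℓ, p i = p j → i = j) ∧
    (∀ i, 1 ≤ i → i < ℓ → t i < t (i + 1)) ∧
    1 ≤ t 1 ∧ t ℓ ≤ K ∧ p 0 ∈ B 0 ∧
    (∀ i, 1 ≤ i → i ≤ ℓ → p i ∈ B (t i))

variable [DecidableRel G.Adj]

def nbrsIn (S X : Finset V) : Finset V :=
  X.filter fun v => ∃ u ∈ S, G.Adj u v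

def nonNbrsIn (S X : Finset V) : Finset V :=
  X.filter fun v => ∀ u ∈ S, ¬ G.Adj u v

def IsSparse [Fintype V] (ε : ℝ) : Prop :=
  ∀ v : V, (G.degree v : ℝ) < ε * Fintype.card V

end Defs

variable {V : Type} {G : SimpleGraph V}

section Neighbours

variable [DecidableRel G.Adj] {S X : Finset V} {v : V}

@[simp]
lemma mem_nbrsIn : v ∈ G.nbrsIn S X ↔ v ∈ X ∧ ∃ u ∈ S, G.Adj u v := mem_filter

@[simp]
lemma mem_nonNbrsIn : v ∈ G.nonNbrsIn S X ↔ v ∈ X ∧ ∀ u ∈ S, ¬ G.Adj u v := mem_filter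

lemma nbrsIn_subset : G.nbrsIn S X ⊆ X := filter_subset _ _

lemma nonNbrsIn_subset : G.nonNbrsIn S X ⊆ X := filter_subset _ _

lemma card_nbrsIn_add_card_nonNbrsIn (S X : Finset V) :
    (G.nbrsIn S X).card + (G.nonNbrsIn S X).card = X.card := by
  simpa only [nbrsIn, nonNbrsIn, not_exists, not_and] using
    card_filter_add_card_filter_not (s := X) fun v => ∃ u ∈ S, G.Adj u v

-- With `Fintype V` in scope the right-hand side elaborates with the decidability instance
-- `Fintype.decidableForallFintype`, which is not definitionally the one in `nonNbrsIn`.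
lemma nonNbrsIn_eq_filter [Fintype V] [DecidableEq V] (S X : Finset V) :
    G.nonNbrsIn S X = X.filter fun v => ∀ u ∈ S, ¬ G.Adj u v :=
  filter_congr_decidable _ _ _

lemma card_nbrsIn_le [Fintype V] [DecidableEq V] {d : ℝ} (hdeg : ∀ v, (G.degree v : ℝ) ≤ d)
    (S X : Finset V) : ((G.nbrsIn S X).card : ℝ) ≤ S.card * d := by
  have hsub : G.nbrsIn S X ⊆ S.biUnion fun u => G.neighborFinset u := by
    intro v hv
    obtain ⟨-, u, hu, huv⟩ := mem_nbrsIn.1 hv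
    exact mem_biUnion.2 ⟨u, hu, (G.mem_neighborFinset u v).2 huv⟩
  calc ((G.nbrsIn S X).card : ℝ) ≤ ∑ u ∈ S, (G.degree u : ℝ) := by
        exact_mod_cast (card_le_card hsub).trans card_biUnion_le
    _ ≤ S.card * d := by simpa using sum_le_card_nsmul S _ d fun u _ => hdeg u

variable [DecidableEq V]

lemma nbrsIn_union (S T X : Finset V) :
    G.nbrsIn (S ∪ T) X = G.nbrsIn S X ∪ G.nbrsIn T X := by
  simp only [nbrsIn, ← filter_or, mem_union, or_and_right, exists_or]

lemma card_nbrsIn_le_mul {s : ℕ} {b : ℝ} (N : ℕ) (hS : S.card ≤ N * s)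
    (h : ∀ T ⊆ S, T.card ≤ s → ((G.nbrsIn T X).card : ℝ) ≤ b) :
    ((G.nbrsIn S X).card : ℝ) ≤ N * b := by
  induction N generalizing S with
  | zero =>
    obtain rfl : S = ∅ := card_eq_zero.1 (by simpa using hS)
    simp [nbrsIn]
  | succ N ih =>
    obtain ⟨T, hTS, hT⟩ := exists_subset_card_eq (min_le_right s S.card)
    have hrest : ((G.nbrsIn (S \ T) X).card : ℝ) ≤ N * b := by
      refine ih ?_ fun T' hT' => h T' (hT'.trans sdiff_subset)
      rw [card_sdiff_of_subset hTS, hT]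
      rw [Nat.succ_mul] at hS
      omega
    rw [← union_sdiff_of_subset hTS, nbrsIn_union]
    calc (((G.nbrsIn T X) ∪ G.nbrsIn (S \ T) X).card : ℝ)
        ≤ (G.nbrsIn T X).card + (G.nbrsIn (S \ T) X).card := by exact_mod_cast card_union_le _ _
      _ ≤ b + N * b := add_le_add (h T hTS (hT ▸ min_le_left _ _)) hrest
      _ = (N + 1 : ℕ) * b := by push_cast; ring

end Neighbours

lemma IsCoherent.card_lt_of_nonNbrsIn [DecidableRel G.Adj] {α β : ℝ} (h : G.IsCoherent α β)
    {A X : Finset V} (hAX : Disjoint A X) (hX : β ≤ (G.nonNbrsIn A X).card) :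
    (A.card : ℝ) < α := by
  by_contra! hA
  exact h ⟨A, _, hAX.mono_right nonNbrsIn_subset,
    fun a ha b hb => (mem_nonNbrsIn.1 hb).2 a ha, hA, hX⟩

lemma hasOrderedInducedPath_zero {K : ℕ} {B : ℕ → Finset V} {x : V} (hx : x ∈ B 0) :
    G.HasOrderedInducedPath 0 K B := by
  refine ⟨fun _ => x, id, ?_, fun _ _ _ _ _ => by omega, fun _ _ _ => by omega, le_rfl,
    Nat.zero_le K, hx, fun _ _ _ => by omega⟩
  intro i hi j hj
  simp [show i = 0 by omega, show j = 0 by omega]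

lemma HasOrderedInducedPath.cons [DecidableRel G.Adj] {L k K j : ℕ} {B B' : ℕ → Finset V}
    {S : Finset V} (h : G.HasOrderedInducedPath L k B') (hS : S ⊆ B 0) (hj : 1 ≤ j)
    (hjk : j + k ≤ K) (hdisj : ∀ i, 1 ≤ i → i ≤ K → Disjoint (B 0) (B i))
    (h0 : B' 0 ⊆ G.nbrsIn S (B j))
    (hpos : ∀ m, 1 ≤ m → m ≤ k → B' m ⊆ G.nonNbrsIn S (B (j + m))) :
    G.HasOrderedInducedPath (L + 1) K B := by
  obtain ⟨p, t, hadj, hinj, hlt, ht1, htL, hp0, hp⟩ := h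
  obtain ⟨hp0B, v, hvS, hvp0⟩ := mem_nbrsIn.1 (h0 hp0)
  have hmono : MonotoneOn t (Set.Icc 1 L) :=
    monotoneOn_of_le_add_one Set.ordConnected_Icc fun i _ hi hi' => (hlt i hi.1 hi'.2).le
  set u : ℕ → ℕ := fun i => if i = 0 then 0 else t i
  have hu : ∀ i ≤ L, u i ≤ k ∧ p i ∈ B (j + u i) ∧ (G.Adj v (p i) ↔ i = 0) := by
    intro i hi
    rcases Nat.eq_zero_or_pos i with rfl | hi0
    · simpa [u] using ⟨hp0B, hvp0⟩
    have h1 : 1 ≤ t i := ht1.trans (hmono ⟨le_rfl, by omega⟩ ⟨hi0, hi⟩ hi0)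
    have h2 : t i ≤ k := (hmono ⟨hi0, hi⟩ ⟨by omega, le_rfl⟩ hi).trans htL
    obtain ⟨hpi, hnadj⟩ := mem_nonNbrsIn.1 (hpos (t i) h1 h2 (hp i hi0 hi))
    simpa [u, hi0.ne', h2, hpi] using hnadj v hvS
  refine ⟨fun | 0 => v | i + 1 => p i, fun | 0 => 0 | i + 1 => j + u i,
    ?_, ?_, ?_, by simpa [u] using hj, (Nat.add_le_add_left (hu L le_rfl).1 j).trans hjk,
    hS hvS, ?_⟩
  · rintro (_ | i) hi (_ | i') hi'
    · simp
    · simpa [eq_comm] using (hu i' (by omega)).2.2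
    · simpa [G.adj_comm, eq_comm] using (hu i (by omega)).2.2
    · simpa using hadj i (by omega) i' (by omega)
  · rintro (_ | i) hi (_ | i') hi' hpp
    · rfl
    · change v = p i' at hpp
      obtain ⟨hle, hmem, -⟩ := hu i' (by omega)
      exact (Finset.disjoint_left.1 (hdisj _ (by omega) (by omega)) (hS hvS) (hpp ▸ hmem)).elim
    · change p i = v at hpp
      obtain ⟨hle, hmem, -⟩ := hu i (by omega)
      exact (Finset.disjoint_left.1 (hdisj _ (by omega) (by omega)) (hS hvS) (hpp ▸ hmem)).elim
    · simpa using hinj i (by omega) i' (by omega) hpp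
  · rintro (_ | i) h1 h2
    · omega
    · show j + u i < j + u (i + 1)
      rcases Nat.eq_zero_or_pos i with rfl | hi0
      · simp [u]; omega
      · simpa [u, hi0.ne'] using hlt i hi0 (by omega)
  · rintro (_ | i) h1 h2
    · omega
    · exact (hu i (by omega)).2.1

lemma card_nbrsIn_le_of_card_le_pow [Fintype V] [DecidableEq V] [DecidableRel G.Adj]
    {A : Finset V} {B : ℕ → Finset V} {d α : ℝ} {k K q : ℕ}
    (hdeg : ∀ v, (G.degree v : ℝ) ≤ d) (hd : 0 ≤ d) (hq : q * α ≤ 2 * d)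
    (hcore : ∀ S ⊆ A, ∀ j, 1 ≤ j → j + k ≤ K →
      (∀ m, 1 ≤ m → m ≤ k → ((G.nbrsIn S (B (j + m))).card : ℝ) ≤ 2 * d) →
      ((G.nbrsIn S (B j)).card : ℝ) ≤ α) (m : ℕ) :
    ∀ S ⊆ A, S.card ≤ q ^ m → ∀ j, 1 ≤ j → j + (m + 1) * k ≤ K →
      ((G.nbrsIn S (B j)).card : ℝ) ≤ α := by
  induction m with
  | zero =>
    intro S hS hSq j hj hjK
    refine hcore S hS j hj (by simpa using hjK) fun m _ _ => ?_
    calc ((G.nbrsIn S (B (j + m))).card : ℝ) ≤ S.card * d := card_nbrsIn_le hdeg S _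
      _ ≤ 1 * d := by gcongr; exact_mod_cast (by simpa using hSq)
      _ ≤ 2 * d := by linarith
  | succ m ih =>
    intro S hS hSq j hj hjK
    have hmul : (m + 1 + 1) * k = (m + 1) * k + k := Nat.succ_mul _ _
    refine hcore S hS j hj (by omega) fun m' hm' hm'k => ?_
    calc ((G.nbrsIn S (B (j + m'))).card : ℝ) ≤ q * α :=
          card_nbrsIn_le_mul q (by rwa [pow_succ'] at hSq) fun T hT hTq =>
            ih T (hT.trans hS) hTq (j + m') (by omega) (by omega)
      _ ≤ 2 * d := hq

lemma exists_cover_nonNbrsIn [DecidableEq V] [DecidableRel G.Adj] {B : ℕ → Finset V} {K k : ℕ}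
    {x : ℝ} (hkK : k + 1 ≤ K) (hB : ∀ j, 1 ≤ j → j ≤ K → x ≤ (B j).card)
    (hB0 : ∀ j, 1 ≤ j → j ≤ k + 1 → x ≤ (G.nonNbrsIn (B 0) (B j)).card) :
    ∃ C : ℕ → Finset V, B 0 = (Icc 1 (K - k)).biUnion C ∧
      ∀ i, 1 ≤ i → i ≤ K - k → ∀ j, i ≤ j → j ≤ i + k → x ≤ (G.nonNbrsIn (C i) (B j)).card := by
  refine ⟨fun i => if i = 1 then B 0 else ∅, ?_, fun i hi1 hi2 j hj1 hj2 => ?_⟩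
  · ext v
    simp only [mem_biUnion, mem_Icc]
    refine ⟨fun hv => ⟨1, ⟨le_rfl, by omega⟩, by simpa using hv⟩, ?_⟩
    rintro ⟨i, -, hv⟩
    split_ifs at hv
    · exact hv
    · simp at hv
  · rcases eq_or_ne i 1 with rfl | hi
    · simpa using hB0 j hj1 (by omega)
    · simpa [hi, nonNbrsIn] using hB j (by omega) (by omega)

section Dichotomy

variable [Fintype V] [DecidableRel G.Adj]

def IsBlockFamily (r : ℕ) (ε : ℝ) (ℓ : ℕ) (B : ℕ → Finset V) : Prop :=
  (∀ i j, i ≤ r ^ ℓ - 1 → j ≤ r ^ ℓ - 1 → i ≠ j → Disjoint (B i) (B j)) ∧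
  ∀ i, 1 ≤ i → i ≤ r ^ ℓ - 1 → (r : ℝ) ^ (2 * ℓ) * ε * Fintype.card V ≤ (B i).card

variable (G) in
def PathDichotomy (r : ℕ) (ε : ℝ) (ℓ : ℕ) : Prop :=
  ∀ B : ℕ → Finset V, IsBlockFamily r ε ℓ B →
    G.HasOrderedInducedPath ℓ (r ^ ℓ - 1) B ∨
    ∀ j, 1 ≤ j → j ≤ r ^ (ℓ - 1) →
      (r : ℝ) ^ (2 * ℓ - 2) * ε * Fintype.card V ≤ (G.nonNbrsIn (B 0) (B j)).card

variable {r : ℕ} {ε : ℝ}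

lemma pathDichotomy_one (hr : 2 ≤ r) (hε : 0 ≤ ε) : G.PathDichotomy r ε 1 := by
  rintro B ⟨hdisj, hB⟩
  refine or_iff_not_imp_left.2 fun hpath j hj1 hj => ?_
  obtain rfl : j = 1 := by simp at hj; omega
  have hK : 1 ≤ r ^ 1 - 1 := by simp; omega
  have hanti : G.nonNbrsIn (B 0) (B 1) = B 1 := by
    refine filter_true_of_mem fun x hx u hu hux => hpath ?_
    exact (hasOrderedInducedPath_zero (B := fun _ => {x}) (K := 0) (mem_singleton_self x)).cons
      (singleton_subset_iff.2 hu) le_rfl hK (fun i hi1 hi2 => hdisj 0 i (by omega) hi2 (by omega))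
      (by simpa [hx]) fun m h1 h2 => by omega
  rw [hanti]
  have h1 : (1 : ℝ) ≤ (r : ℝ) ^ 2 := one_le_pow₀ (by exact_mod_cast (by omega : 1 ≤ r))
  have hεn : 0 ≤ ε * Fintype.card V := mul_nonneg hε (Nat.cast_nonneg _)
  have := hB 1 le_rfl hK
  simp only [mul_one, Nat.sub_self, pow_zero, one_mul] at this ⊢
  linarith [le_mul_of_one_le_left hεn h1]

lemma card_nbrsIn_lt_of_pathDichotomy [DecidableEq V] {c : ℝ} {L j : ℕ} {B : ℕ → Finset V}
    {S : Finset V} (hcoh : G.IsCoherent (ε * (Fintype.card V : ℝ) ^ (1 - c)) (ε * Fintype.card V))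
    (hr : 2 ≤ r) (hε : 0 ≤ ε) (hL : 1 ≤ L) (ih : G.PathDichotomy r ε L)
    (hB : IsBlockFamily r ε (L + 1) B)
    (hpath : ¬ G.HasOrderedInducedPath (L + 1) (r ^ (L + 1) - 1) B)
    (hS : S ⊆ B 0) (hj : 1 ≤ j) (hjk : j + (r ^ L - 1) ≤ r ^ (L + 1) - 1)
    (hnbrs : ∀ m, 1 ≤ m → m ≤ r ^ L - 1 →
      ((G.nbrsIn S (B (j + m))).card : ℝ) ≤ 2 * (ε * Fintype.card V)) :
    ((G.nbrsIn S (B j)).card : ℝ) < ε * (Fintype.card V : ℝ) ^ (1 - c) := by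
  have hεn : 0 ≤ ε * Fintype.card V := mul_nonneg hε (Nat.cast_nonneg _)
  have hk : 1 ≤ r ^ L - 1 := by
    have := Nat.le_self_pow (by omega : L ≠ 0) r
    omega
  set B' : ℕ → Finset V := fun m => if m = 0 then G.nbrsIn S (B j) else G.nonNbrsIn S (B (j + m))
  have hB'sub : ∀ m, B' m ⊆ B (j + m) := by
    intro m
    rcases eq_or_ne m 0 with rfl | hm
    · simpa [B'] using nbrsIn_subset
    · simpa [B', hm] using nonNbrsIn_subset
  have hB' : IsBlockFamily r ε L B' := by
    refine ⟨fun i i' hi hi' hii' => (hB.1 (j + i) (j + i') (by omega) (by omega) (by omega)).mono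
      (hB'sub i) (hB'sub i'), fun i hi1 hi2 => ?_⟩
    have hsum : ((G.nbrsIn S (B (j + i))).card : ℝ) + (G.nonNbrsIn S (B (j + i))).card =
        (B (j + i)).card := mod_cast card_nbrsIn_add_card_nonNbrsIn S _
    have hbig := hB.2 (j + i) (by omega) (by omega)
    have hsmall := hnbrs i hi1 hi2
    simp only [B', if_neg (by omega : i ≠ 0)]
    linarith [pow_mul_le_pow_succ_mul_sub hr hεn L]
  rcases ih B' hB' with hpath' | hfew
  · refine absurd (hpath'.cons hS hj hjk (fun i hi1 hi2 => hB.1 0 i (by omega) hi2 (by omega))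
      (by simp [B']) fun m hm _ => by simp [B', show m ≠ 0 by omega]) hpath
  · have hdisj : Disjoint (B' 0) (B' 1) :=
      (hB.1 (j + 0) (j + 1) (by omega) (by omega) (by omega)).mono (hB'sub 0) (hB'sub 1)
    have hfew1 := hfew 1 le_rfl (Nat.one_le_pow _ _ (by omega))
    have hpow : (1 : ℝ) ≤ (r : ℝ) ^ (2 * L - 2) :=
      one_le_pow₀ (by exact_mod_cast (by omega : 1 ≤ r))
    have := hcoh.card_lt_of_nonNbrsIn hdisj
      ((le_mul_of_one_le_left hεn hpow).trans (by linarith))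
    simpa [B'] using this

lemma PathDichotomy.succ [DecidableEq V] {c : ℝ} {L : ℕ} (hsparse : G.IsSparse ε)
    (hcoh : G.IsCoherent (ε * (Fintype.card V : ℝ) ^ (1 - c)) (ε * Fintype.card V))
    (hc : 0 < c) (hr : (r : ℝ) = 2 + 1 / c) (hε : 0 ≤ ε) (hL : 1 ≤ L)
    (ih : G.PathDichotomy r ε L) : G.PathDichotomy r ε (L + 1) := by
  intro B hB
  refine or_iff_not_imp_left.2 fun hpath j hj1 hj => ?_
  rw [Nat.add_sub_cancel] at hj
  rcases isEmpty_or_nonempty V with hV | hV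
  · simp
  have hn : (1 : ℝ) ≤ Fintype.card V := by exact_mod_cast Fintype.card_pos
  have hεn : 0 ≤ ε * Fintype.card V := mul_nonneg hε (by linarith)
  have hr2 : 2 ≤ r := (two_lt_of_eq_two_add_one_div hc hr).le
  obtain ⟨q, hnq, hq⟩ := exists_nat_le_pow_and_mul_rpow_le (mul_cast_sub_two_eq_one hc hr) hn
  have hB0 : (B 0).card ≤ q ^ (r - 2) := by
    have : ((B 0).card : ℝ) ≤ Fintype.card V := by exact_mod_cast card_le_univ _
    exact_mod_cast this.trans hnq
  have hidx : j + (r - 2 + 1) * (r ^ L - 1) ≤ r ^ (L + 1) - 1 := by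
    rw [pow_succ']
    exact add_mul_sub_one_le hr2 (Nat.one_le_pow _ _ (by omega)) hj
  have hqε : q * (ε * (Fintype.card V : ℝ) ^ (1 - c)) ≤ 2 * (ε * Fintype.card V) := by
    calc q * (ε * (Fintype.card V : ℝ) ^ (1 - c)) = ε * (q * (Fintype.card V : ℝ) ^ (1 - c)) := by
          ring
      _ ≤ ε * (2 * Fintype.card V) := by gcongr
      _ = 2 * (ε * Fintype.card V) := by ring
  have hfew : ((G.nbrsIn (B 0) (B j)).card : ℝ) ≤ ε * (Fintype.card V : ℝ) ^ (1 - c) :=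
    card_nbrsIn_le_of_card_le_pow (fun v => (hsparse v).le) hεn hqε
      (fun S hS j hj hjk hnbrs =>
        (card_nbrsIn_lt_of_pathDichotomy hcoh hr2 hε hL ih hB hpath hS hj hjk hnbrs).le)
      (r - 2) (B 0) subset_rfl hB0 j hj1 hidx
  have hsum : ((G.nbrsIn (B 0) (B j)).card : ℝ) + (G.nonNbrsIn (B 0) (B j)).card =
      (B j).card := mod_cast card_nbrsIn_add_card_nonNbrsIn _ _
  have hbig := hB.2 j hj1 (by omega)
  have hle : ε * (Fintype.card V : ℝ) ^ (1 - c) ≤ ε * Fintype.card V :=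
    mul_le_mul_of_nonneg_left (Real.rpow_le_self_of_one_le hn (by linarith)) hε
  rw [show 2 * (L + 1) - 2 = 2 * L by omega]
  linarith [pow_mul_le_pow_succ_mul_sub hr2 hεn L]

lemma pathDichotomy [DecidableEq V] {c : ℝ} (hsparse : G.IsSparse ε)
    (hcoh : G.IsCoherent (ε * (Fintype.card V : ℝ) ^ (1 - c)) (ε * Fintype.card V))
    (hc : 0 < c) (hr : (r : ℝ) = 2 + 1 / c) (hε : 0 ≤ ε) {ℓ : ℕ} (hℓ : 1 ≤ ℓ) :
    G.PathDichotomy r ε ℓ := by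
  induction ℓ, hℓ using Nat.le_induction with
  | base => exact pathDichotomy_one (two_lt_of_eq_two_add_one_div hc hr).le hε
  | succ L hL ih => exact ih.succ hsparse hcoh hc hr hε hL

end Dichotomy

end SimpleGraph

theorem stmt_9_general {V : Type} [Fintype V] [DecidableEq V] (G : SimpleGraph V) [DecidableRel G.Adj]
    (c : ℝ) (hc : 0 < c) (r : ℕ) (hr : (r : ℝ) = 2 + 1 / c)
    (ℓ : ℕ) (hℓ : 1 ≤ ℓ) (K k : ℕ) (hK : K = r ^ ℓ - 1) (hk : k = r ^ (ℓ - 1) - 1)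
    (ε : ℝ) (hε0 : 0 < ε)
    (hsparse : ∀ v : V, (G.degree v : ℝ) < ε * Fintype.card V)
    (hcoherent : ¬ ∃ A B : Finset V, Disjoint A B ∧
      (∀ a ∈ A, ∀ b ∈ B, ¬ G.Adj a b) ∧
      ε * (Fintype.card V : ℝ) ^ (1 - c) ≤ (A.card : ℝ) ∧
      ε * Fintype.card V ≤ (B.card : ℝ))
    (B : ℕ → Finset V)
    (hdisj : ∀ i j, i ≤ K → j ≤ K → i ≠ j → Disjoint (B i) (B j))
    (hBi : ∀ i, 1 ≤ i → i ≤ K →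
      ((r : ℝ) ^ (2 * ℓ)) * ε * Fintype.card V ≤ ((B i).card : ℝ)) :
    (∃ (p : ℕ → V) (t : ℕ → ℕ),
      (∀ i ≤ ℓ, ∀ j ≤ ℓ, (G.Adj (p i) (p j) ↔ (i = j + 1 ∨ j = i + 1))) ∧
      (∀ i ≤ ℓ, ∀ j ≤ ℓ, p i = p j → i = j) ∧
      (∀ i, 1 ≤ i → i < ℓ → t i < t (i + 1)) ∧
      1 ≤ t 1 ∧ t ℓ ≤ K ∧ p 0 ∈ B 0 ∧
      (∀ i, 1 ≤ i → i ≤ ℓ → p i ∈ B (t i))) ∨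
    (((B 0).card : ℝ) ≤ (K : ℝ) * ε * (Fintype.card V : ℝ) ^ (1 - c) ∧
      ∃ C : ℕ → Finset V,
        B 0 = (Finset.Icc 1 (K - k)).biUnion C ∧
        ∀ i, 1 ≤ i → i ≤ K - k → ∀ j, i ≤ j → j ≤ i + k →
          ((r : ℝ) ^ (2 * ℓ - 2)) * ε * Fintype.card V ≤
            (((B j).filter (fun v => ∀ u ∈ C i, ¬ G.Adj u v)).card : ℝ)) := by
  subst hK hk
  have hr2 : 2 ≤ r := (two_lt_of_eq_two_add_one_div hc hr).le
  have hr1 : (1 : ℝ) ≤ r := by exact_mod_cast (by omega : 1 ≤ r)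
  have hk1 : 1 ≤ r ^ (ℓ - 1) := Nat.one_le_pow _ _ (by omega)
  have hkK : r ^ (ℓ - 1) ≤ r ^ ℓ - 1 := by
    obtain ⟨L, rfl⟩ := Nat.exists_eq_add_of_le' hℓ
    have := Nat.mul_le_mul_left (r ^ L) hr2
    rw [Nat.add_sub_cancel, pow_succ]
    omega
  obtain hpath | hfew := G.pathDichotomy hsparse hcoherent hc hr hε0.le hℓ B ⟨hdisj, hBi⟩
  · exact Or.inl hpath
  have hεn : 0 ≤ ε * Fintype.card V := by positivity
  have hB0 : ((B 0).card : ℝ) < ε * (Fintype.card V : ℝ) ^ (1 - c) :=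
    SimpleGraph.IsCoherent.card_lt_of_nonNbrsIn hcoherent
      (hdisj 0 1 (by omega) (by omega) zero_ne_one)
      ((le_mul_of_one_le_left hεn (one_le_pow₀ hr1)).trans (by linarith [hfew 1 le_rfl hk1]))
  have hBj : ∀ j, 1 ≤ j → j ≤ r ^ ℓ - 1 →
      (r : ℝ) ^ (2 * ℓ - 2) * ε * Fintype.card V ≤ (B j).card := fun j hj1 hj2 =>
    le_trans (by gcongr; first | exact hr1 | omega) (hBi j hj1 hj2)
  refine Or.inr ⟨?_, by simpa only [SimpleGraph.nonNbrsIn_eq_filter] using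
    G.exists_cover_nonNbrsIn (by omega) hBj fun j hj1 hj2 => hfew j hj1 (by omega)⟩
  have hK1 : (1 : ℝ) ≤ (r ^ ℓ - 1 : ℕ) := by exact_mod_cast (by omega : 1 ≤ r ^ ℓ - 1)
  nlinarith [Real.rpow_nonneg (Nat.cast_nonneg (α := ℝ) (Fintype.card V)) (1 - c)]

/-- the key lemma towards the pathfinder. -/
theorem stmt_9 {V : Type} [Fintype V] [DecidableEq V] (G : SimpleGraph V) [DecidableRel G.Adj]
    (c : ℝ) (hc : 0 < c) (r : ℕ) (hr : (r : ℝ) = 2 + 1 / c)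
    (ℓ : ℕ) (hℓ : 1 ≤ ℓ) (K k : ℕ) (hK : K = r ^ ℓ - 1) (hk : k = r ^ (ℓ - 1) - 1)
    (ε : ℝ) (hε0 : 0 < ε)
    (hsparse : ∀ v : V, (G.degree v : ℝ) < ε * Fintype.card V)
    (hcoherent : ¬ ∃ A B : Finset V, Disjoint A B ∧
      (∀ a ∈ A, ∀ b ∈ B, ¬ G.Adj a b) ∧
      ε * (Fintype.card V : ℝ) ^ (1 - c) ≤ (A.card : ℝ) ∧
      ε * Fintype.card V ≤ (B.card : ℝ))
    (B : ℕ → Finset V)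
    (hdisj : ∀ i j, i ≤ K → j ≤ K → i ≠ j → Disjoint (B i) (B j))
    (hB0 : (B 0).Nonempty)
    (hBi : ∀ i, 1 ≤ i → i ≤ K →
      ((r : ℝ) ^ (2 * ℓ)) * ε * Fintype.card V ≤ ((B i).card : ℝ)) :
    (∃ (p : ℕ → V) (t : ℕ → ℕ),
      (∀ i ≤ ℓ, ∀ j ≤ ℓ, (G.Adj (p i) (p j) ↔ (i = j + 1 ∨ j = i + 1))) ∧
      (∀ i ≤ ℓ, ∀ j ≤ ℓ, p i = p j → i = j) ∧
      (∀ i, 1 ≤ i → i < ℓ → t i < t (i + 1)) ∧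
      1 ≤ t 1 ∧ t ℓ ≤ K ∧ p 0 ∈ B 0 ∧
      (∀ i, 1 ≤ i → i ≤ ℓ → p i ∈ B (t i))) ∨
    (((B 0).card : ℝ) ≤ (K : ℝ) * ε * (Fintype.card V : ℝ) ^ (1 - c) ∧
      ∃ C : ℕ → Finset V,
        B 0 = (Finset.Icc 1 (K - k)).biUnion C ∧
        ∀ i, 1 ≤ i → i ≤ K - k → ∀ j, i ≤ j → j ≤ i + k →
          ((r : ℝ) ^ (2 * ℓ - 2)) * ε * Fintype.card V ≤
            (((B j).filter (fun v => ∀ u ∈ C i, ¬ G.Adj u v)).card : ℝ)) :=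
  stmt_9_general G c hc r hr ℓ hℓ K k hK hk ε hε0 hsparse hcoherent B hdisj hBi
end

section
/- Let c > 0 with 1/c an integer, and suppose the statement 'for every graph H of branch-length at least 4/c+5 there exists ε > 0 such that every ε-sparse (ε|G|^{1−c}, ε|G|)-coherent graph G with |G| > 1 contains H as an induced subgraph' holds. Then for all graphs H_1, H_2 of branch-length at least 4/c+5, there exists ε > 0 such that every graph G with |G| > 1 that contains neither H_1 nor the complement of H_2 as an induced subgraph has a pure pair A, B with |A| ≥ ε|G| and |B| ≥ ε|G|^{1−c}. -/
/-- G contains H: some induced subgraph of G is isomorphic to H. -/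
def Contains {V W : Type} (G : SimpleGraph V) (H : SimpleGraph W) : Prop :=
  ∃ f : W → V, Function.Injective f ∧ ∀ a b : W, H.Adj a b ↔ G.Adj (f a) (f b)

/-- H has branch-length at least ℓ: every cycle has length at least ℓ, and every two
distinct vertices of degree at least three are at distance at least ℓ. -/
def BranchLengthGE {W : Type} (H : SimpleGraph W) (ℓ : ℝ) : Prop :=
  (∀ (v : W) (p : H.Walk v v), p.IsCycle → ℓ ≤ (p.length : ℝ)) ∧
  (∀ u v : W, u ≠ v → 3 ≤ {x | H.Adj u x}.ncard → 3 ≤ {x | H.Adj v x}.ncard →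
    ∀ p : H.Walk u v, ℓ ≤ (p.length : ℝ))

/-- G is ε-sparse: every vertex has degree less than ε|G|. -/
def EpsSparse {V : Type} [Fintype V] (G : SimpleGraph V) (ε : ℝ) : Prop :=
  ∀ v : V, ({u | G.Adj v u}.ncard : ℝ) < ε * Fintype.card V

/-- G is (α, β)-coherent: no disjoint anticomplete pair of sizes ≥ α, ≥ β. -/
def Coherent {V : Type} [Fintype V] (G : SimpleGraph V) (α β : ℝ) : Prop :=
  ¬ ∃ A B : Finset V, Disjoint A B ∧ (∀ a ∈ A, ∀ b ∈ B, ¬ G.Adj a b) ∧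
    α ≤ (A.card : ℝ) ∧ β ≤ (B.card : ℝ)

/-! Apply Rödl's theorem to `H₁` with `η` below the sparse-case constants `ε₁, ε₂` of `H₁, H₂`:
this gives a set `X` of at least `δ|G|` vertices on which `G` or its complement is `η`-sparse.
As `G[X]` has no induced `H₁` and its complement no induced `H₂`, the sparse case shows that
`G[X]`, resp. its complement, is not coherent; the resulting anticomplete pair is a pure pair of
`G` of sizes `η|X|` and `η|X|^(1-c)`, and `|X| ≥ δ|G|` turns these into `ηδ|G|` and
`ηδ|G|^(1-c)` because `1 - c ≤ 1`. If `|X| ≤ 1` then `ηδ|G| ≤ 1` (we take `η ≤ 1`), and two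
distinct vertices already form a large enough pure pair. -/

open Finset

variable {V W W₁ W₂ : Type}

def IsPurePair (G : SimpleGraph V) (A B : Finset V) : Prop :=
  Disjoint A B ∧ ((∀ a ∈ A, ∀ b ∈ B, G.Adj a b) ∨ (∀ a ∈ A, ∀ b ∈ B, ¬ G.Adj a b))

def SparseOn (G : SimpleGraph V) (X : Finset V) (ε : ℝ) : Prop :=
  ∀ v ∈ X, ({u | u ∈ X ∧ G.Adj v u}.ncard : ℝ) < ε * #X

def ContainedInSparseCoherent (H : SimpleGraph W) (ε p : ℝ) : Prop :=
  ∀ (V : Type) [Fintype V] (G : SimpleGraph V), 1 < Fintype.card V → EpsSparse G ε →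
    Coherent G (ε * (Fintype.card V : ℝ) ^ p) (ε * Fintype.card V) → Contains G H

namespace IsPurePair

variable {G : SimpleGraph V} {A B : Finset V}

theorem symm (h : IsPurePair G A B) : IsPurePair G B A :=
  ⟨h.1.symm, h.2.imp (fun h b hb a ha => (h a ha b hb).symm)
    (fun h b hb a ha hba => h a ha b hb hba.symm)⟩

theorem of_compl (h : IsPurePair Gᶜ A B) : IsPurePair G A B := by
  refine ⟨h.1, h.2.symm.imp (fun hanti a ha b hb => ?_) (fun hcomp a ha b hb hab => ?_)⟩
  · have hne : a ≠ b := fun hab => Finset.disjoint_left.1 h.1 ha (hab ▸ hb)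
    simpa [hne] using hanti a ha b hb
  · exact (hcomp a ha b hb).2 hab

theorem exists_of_not_coherent [Fintype V] {α β : ℝ} (h : ¬ Coherent G α β) :
    ∃ A B, IsPurePair G A B ∧ α ≤ #A ∧ β ≤ #B := by
  obtain ⟨A, B, hAB, hanti, hA, hB⟩ := not_not.1 h
  exact ⟨A, B, ⟨hAB, Or.inr hanti⟩, hA, hB⟩

theorem exists_of_card_mul_le_one [Fintype V] (G : SimpleGraph V) (hV : 1 < Fintype.card V)
    {ε p : ℝ} (hε : 0 ≤ ε) (hp : p ≤ 1) (h : ε * Fintype.card V ≤ 1) :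
    ∃ A B, IsPurePair G A B ∧ ε * Fintype.card V ≤ #A ∧
      ε * (Fintype.card V : ℝ) ^ p ≤ #B := by
  obtain ⟨u, v, huv⟩ := Fintype.exists_pair_of_one_lt_card hV
  have hpow : (Fintype.card V : ℝ) ^ p ≤ Fintype.card V :=
    Real.rpow_le_self_of_one_le (by exact_mod_cast hV.le) hp
  refine ⟨{u}, {v}, ⟨disjoint_singleton.2 huv, ?_⟩, by simpa using h, ?_⟩
  · by_cases huv : G.Adj u v
    · exact Or.inl (by simpa using huv)
    · exact Or.inr (by simpa using huv)
  · simpa using (mul_le_mul_of_nonneg_left hpow hε).trans h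

end IsPurePair

theorem Contains.of_induce {G : SimpleGraph V} {s : Set V} {H : SimpleGraph W}
    (h : Contains (G.induce s) H) : Contains G H := by
  obtain ⟨f, hf, hadj⟩ := h
  exact ⟨Subtype.val ∘ f, Subtype.val_injective.comp hf, hadj⟩

theorem Contains.compl {G : SimpleGraph V} {H : SimpleGraph W} (h : Contains Gᶜ H) :
    Contains G Hᶜ := by
  obtain ⟨f, hf, hadj⟩ := h
  refine ⟨f, hf, fun a b => ?_⟩
  have := G.ne_of_adj (a := f a) (b := f b)
  simp only [SimpleGraph.compl_adj, hadj, hf.ne_iff]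
  tauto

theorem Coherent.induce [Fintype V] {G : SimpleGraph V} {α β : ℝ} (h : Coherent G α β)
    (s : Set V) [Fintype s] : Coherent (G.induce s) α β := by
  rintro ⟨A, B, hAB, hanti, hA, hB⟩
  refine h ⟨A.map (Function.Embedding.subtype _), B.map (Function.Embedding.subtype _),
    disjoint_map _ |>.2 hAB, ?_, by simpa using hA, by simpa using hB⟩
  simp only [mem_map, Function.Embedding.coe_subtype]
  rintro _ ⟨a, ha, rfl⟩ _ ⟨b, hb, rfl⟩
  exact hanti a ha b hb

namespace SparseOn

variable {G : SimpleGraph V} {X : Finset V} {ε : ℝ}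

theorem mono {η : ℝ} (h : SparseOn G X η) (hηε : η ≤ ε) : SparseOn G X ε :=
  fun v hv => (h v hv).trans_le (by gcongr)

theorem compl_iff :
    SparseOn Gᶜ X ε ↔ ∀ v ∈ X, ({u | u ∈ X ∧ u ≠ v ∧ ¬ G.Adj v u}.ncard : ℝ) < ε * #X := by
  simp only [SparseOn, SimpleGraph.compl_adj, ne_comm]

theorem epsSparse_induce (h : SparseOn G X ε) : EpsSparse (G.induce (X : Set V)) ε := by
  intro v
  have himage : Subtype.val '' {u : (X : Set V) | (G.induce (X : Set V)).Adj v u} =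
      {u | u ∈ X ∧ G.Adj v u} := by
    ext u
    simp [and_comm]
  rw [← Set.ncard_image_of_injective _ Subtype.val_injective, himage]
  simp only [SetLike.coe_sort_coe, Fintype.card_coe]
  exact h v v.2

end SparseOn

theorem ContainedInSparseCoherent.not_coherent [Fintype V] {H : SimpleGraph W} {ε p : ℝ}
    (hH : ContainedInSparseCoherent H ε p) {G : SimpleGraph V} (hG : ¬ Contains G H)
    {X : Finset V} (hX : 1 < #X) (hsp : SparseOn G X ε) :
    ¬ Coherent G (ε * (#X : ℝ) ^ p) (ε * #X) := fun hcoh => by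
  have hcard : Fintype.card (X : Set V) = #X := Fintype.card_coe X
  refine hG (Contains.of_induce (hH _ (G.induce (X : Set V)) ?_ hsp.epsSparse_induce ?_))
  · rwa [hcard]
  · rw [hcard]
    exact hcoh.induce (X : Set V)

theorem exists_isPurePair_of_sparseOn_or_sparseOn_compl [Fintype V] {H₁ : SimpleGraph W₁}
    {H₂ : SimpleGraph W₂} {ε₁ ε₂ η p : ℝ} (hs₁ : ContainedInSparseCoherent H₁ ε₁ p)
    (hs₂ : ContainedInSparseCoherent H₂ ε₂ p) (hη₁ : η ≤ ε₁) (hη₂ : η ≤ ε₂)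
    {G : SimpleGraph V} (hG₁ : ¬ Contains G H₁) (hG₂ : ¬ Contains G H₂ᶜ) {X : Finset V}
    (hX : 1 < #X) (hsp : SparseOn G X η ∨ SparseOn Gᶜ X η) :
    ∃ A B, IsPurePair G A B ∧ η * (#X : ℝ) ^ p ≤ #A ∧ η * #X ≤ #B := by
  obtain ⟨ε, hηε, A, B, hAB, hA, hB⟩ :
      ∃ ε ≥ η, ∃ A B, IsPurePair G A B ∧ ε * (#X : ℝ) ^ p ≤ #A ∧ ε * #X ≤ #B := by
    rcases hsp with hsp | hsp
    · exact ⟨ε₁, hη₁, IsPurePair.exists_of_not_coherent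
        (hs₁.not_coherent hG₁ hX (hsp.mono hη₁))⟩
    · obtain ⟨A, B, hAB, hA, hB⟩ := IsPurePair.exists_of_not_coherent
        (hs₂.not_coherent (fun h => hG₂ h.compl) hX (hsp.mono hη₂))
      exact ⟨ε₂, hη₂, A, B, hAB.of_compl, hA, hB⟩
  exact ⟨A, B, hAB, le_trans (by gcongr) hA, le_trans (by gcongr) hB⟩

theorem mul_rpow_le_rpow_of_mul_le {δ n x p : ℝ} (hδ : 0 < δ) (hp : p ≤ 1) (hx : 0 < x)
    (hδx : δ * n ≤ x) (hxn : x ≤ n) : δ * n ^ p ≤ x ^ p := by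
  have hn : 0 < n := hx.trans_le hxn
  have hδ1 : δ ≤ 1 := le_of_mul_le_mul_right (by linarith) hn
  rcases le_total 0 p with hp0 | hp0
  · calc δ * n ^ p ≤ δ ^ p * n ^ p := by
          gcongr
          simpa using Real.rpow_le_rpow_of_exponent_ge hδ hδ1 hp
      _ = (δ * n) ^ p := (Real.mul_rpow hδ.le hn.le).symm
      _ ≤ x ^ p := Real.rpow_le_rpow (by positivity) hδx hp0
  · calc δ * n ^ p ≤ n ^ p := mul_le_of_le_one_left (by positivity) hδ1
      _ ≤ x ^ p := Real.rpow_le_rpow_of_nonpos hx hxn hp0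

theorem stmt_10_general (c : ℝ) (hc : 0 < c)
    (rodl : ∀ (W : Type) [Fintype W] (H : SimpleGraph W) (η : ℝ), 0 < η →
      ∃ δ : ℝ, 0 < δ ∧ ∀ (V : Type) [Fintype V] (G : SimpleGraph V), ¬ Contains G H →
        ∃ X : Finset V, δ * Fintype.card V ≤ (X.card : ℝ) ∧
          ((∀ v ∈ X, (({u | u ∈ X ∧ G.Adj v u}.ncard : ℝ) < η * X.card)) ∨
           (∀ v ∈ X, (({u | u ∈ X ∧ u ≠ v ∧ ¬ G.Adj v u}.ncard : ℝ) < η * X.card))))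
    (sparsecase : ∀ (W : Type) [Fintype W] (H : SimpleGraph W), BranchLengthGE H (4 / c + 5) →
      ∃ ε : ℝ, 0 < ε ∧ ∀ (V : Type) [Fintype V] (G : SimpleGraph V), 1 < Fintype.card V →
        EpsSparse G ε →
        Coherent G (ε * (Fintype.card V : ℝ) ^ (1 - c)) (ε * Fintype.card V) →
        Contains G H)
    (W₁ W₂ : Type) [Fintype W₁] [Fintype W₂] (H₁ : SimpleGraph W₁) (H₂ : SimpleGraph W₂)
    (h₁ : BranchLengthGE H₁ (4 / c + 5)) (h₂ : BranchLengthGE H₂ (4 / c + 5)) :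
    ∃ ε : ℝ, 0 < ε ∧ ∀ (V : Type) [Fintype V] (G : SimpleGraph V), 1 < Fintype.card V →
      ¬ Contains G H₁ → ¬ Contains G H₂ᶜ →
      ∃ A B : Finset V, Disjoint A B ∧
        ((∀ a ∈ A, ∀ b ∈ B, G.Adj a b) ∨ (∀ a ∈ A, ∀ b ∈ B, ¬ G.Adj a b)) ∧
        ε * Fintype.card V ≤ (A.card : ℝ) ∧
        ε * (Fintype.card V : ℝ) ^ (1 - c) ≤ (B.card : ℝ) := by
  have hp : 1 - c ≤ 1 := by linarith
  obtain ⟨ε₁, hε₁, hs₁⟩ := sparsecase W₁ H₁ h₁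
  obtain ⟨ε₂, hε₂, hs₂⟩ := sparsecase W₂ H₂ h₂
  set η := min (min ε₁ ε₂) 1 with hη
  obtain ⟨δ, hδ, hrodl⟩ := rodl W₁ H₁ η (by positivity)
  refine ⟨η * δ, by positivity, fun V _ G hV hG₁ hG₂ => ?_⟩
  obtain ⟨X, hδX, hXsp⟩ := hrodl V G hG₁
  rcases lt_or_ge 1 #X with hX | hX
  · obtain ⟨A, B, hAB, hA, hB⟩ := exists_isPurePair_of_sparseOn_or_sparseOn_compl hs₁ hs₂
      (by simp [hη]) (by simp [hη]) hG₁ hG₂ hX (hXsp.imp id SparseOn.compl_iff.2)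
    have hXV : (#X : ℝ) ≤ Fintype.card V := by exact_mod_cast card_le_univ X
    refine ⟨B, A, hAB.symm.1, hAB.symm.2, le_trans ?_ hB, le_trans ?_ hA⟩
    · rw [mul_assoc]
      gcongr
    · rw [mul_assoc]
      gcongr
      exact mul_rpow_le_rpow_of_mul_le hδ hp (by positivity) hδX hXV
  · obtain ⟨A, B, hAB, hA, hB⟩ := IsPurePair.exists_of_card_mul_le_one G hV (ε := η * δ)
      (by positivity) hp (by
        rw [mul_assoc]
        exact mul_le_one₀ (min_le_right _ _) (by positivity) (hδX.trans (by exact_mod_cast hX)))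
    exact ⟨A, B, hAB.1, hAB.2, hA, hB⟩

/-- reduction of the main theorem to the sparse case,
assuming Rödl's theorem as a hypothesis. -/
theorem stmt_10 (c : ℝ) (hc : 0 < c) (hci : ∃ m : ℕ, (m : ℝ) * c = 1)
    (rodl : ∀ (W : Type) [Fintype W] (H : SimpleGraph W) (η : ℝ), 0 < η →
      ∃ δ : ℝ, 0 < δ ∧ ∀ (V : Type) [Fintype V] (G : SimpleGraph V), ¬ Contains G H →
        ∃ X : Finset V, δ * Fintype.card V ≤ (X.card : ℝ) ∧
          ((∀ v ∈ X, (({u | u ∈ X ∧ G.Adj v u}.ncard : ℝ) < η * X.card)) ∨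
           (∀ v ∈ X, (({u | u ∈ X ∧ u ≠ v ∧ ¬ G.Adj v u}.ncard : ℝ) < η * X.card))))
    (sparsecase : ∀ (W : Type) [Fintype W] (H : SimpleGraph W), BranchLengthGE H (4 / c + 5) →
      ∃ ε : ℝ, 0 < ε ∧ ∀ (V : Type) [Fintype V] (G : SimpleGraph V), 1 < Fintype.card V →
        EpsSparse G ε →
        Coherent G (ε * (Fintype.card V : ℝ) ^ (1 - c)) (ε * Fintype.card V) →
        Contains G H)
    (W₁ W₂ : Type) [Fintype W₁] [Fintype W₂] (H₁ : SimpleGraph W₁) (H₂ : SimpleGraph W₂)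
    (h₁ : BranchLengthGE H₁ (4 / c + 5)) (h₂ : BranchLengthGE H₂ (4 / c + 5)) :
    ∃ ε : ℝ, 0 < ε ∧ ∀ (V : Type) [Fintype V] (G : SimpleGraph V), 1 < Fintype.card V →
      ¬ Contains G H₁ → ¬ Contains G H₂ᶜ →
      ∃ A B : Finset V, Disjoint A B ∧
        ((∀ a ∈ A, ∀ b ∈ B, G.Adj a b) ∨ (∀ a ∈ A, ∀ b ∈ B, ¬ G.Adj a b)) ∧
        ε * Fintype.card V ≤ (A.card : ℝ) ∧
        ε * (Fintype.card V : ℝ) ^ (1 - c) ≤ (B.card : ℝ) :=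
  stmt_10_general c hc rodl sparsecase W₁ W₂ H₁ H₂ h₁ h₂
end
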